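/- Let ω = e^{2πi/3}, let u, v, u_x, u_{xx}, v_x ∈ ℝ, let k ∈ ℂ with k ≠ 0, and let L(k) = −kJ + U^{(0)} + (1/k)U^{(−1)} and Z(k) = k²J² + kV^{(1)} + V^{(0)} + (1/k)V^{(−1)} be the gauge-transformed Lax matrices of the Hirota–Satsuma system, where J = diag(ω, ω², 1), U^{(0)} = (u/3)[[0,ω²,ω],[ω,0,ω²],[ω²,ω,0]], U^{(−1)} = −(v/3)[[ω²,1,ω],[1,ω,ω²],[ω,ω²,1]], V^{(1)} = (u/3)[[0,ω²,1],[ω,0,1],[ω,ω²,0]], V^{(−1)} = ((2u_{xx}−uv−3v_x)/9)[[ω²,1,ω],[1,ω,ω²],[ω,ω²,1]], and V^{(0)} = (1/9)[[0, ω²u²+(1−ω)u_x−3v, ωu²+(ω+2)u_x−3v],[ωu²−3v+(ω+2)u_x, 0, ω²u²+(1−ω)u_x−3v],[ω²u²−3v+(1−ω)u_x, ωu²−3v+(ω+2)u_x, 0]]. Let 𝓑 = [[0,1,0],[1,0,0],[0,0,1]]. Then L(k) = 𝓑 · conj(L(conj k)) · 𝓑 and Z(k) = 𝓑 · conj(Z(conj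 k)) · 𝓑, where conj denotes entrywise complex conjugation. -/

import Mathlib

open Matrix

/-- ω = e^{2πi/3}, a primitive cube root of unity. -/
noncomputable def ω : ℂ := Complex.exp (2 * Real.pi * Complex.I / 3)

/-- The diagonal matrix J = diag(ω, ω², 1). -/
noncomputable def Jmat : Matrix (Fin 3) (Fin 3) ℂ := Matrix.diagonal ![ω, ω^2, 1]

/-- U⁽⁰⁾. -/
noncomputable def U0 (u : ℝ) : Matrix (Fin 3) (Fin 3) ℂ :=
  ((u : ℂ)/3) • !![0, ω^2, ω; ω, 0, ω^2; ω^2, ω, 0]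

/-- U⁽⁻¹⁾. -/
noncomputable def Um1 (v : ℝ) : Matrix (Fin 3) (Fin 3) ℂ :=
  (-(v : ℂ)/3) • !![ω^2, 1, ω; 1, ω, ω^2; ω, ω^2, 1]

/-- V⁽¹⁾. -/
noncomputable def V1 (u : ℝ) : Matrix (Fin 3) (Fin 3) ℂ :=
  ((u : ℂ)/3) • !![0, ω^2, 1; ω, 0, 1; ω, ω^2, 0]

/-- V⁽⁻¹⁾. -/
noncomputable def Vm1 (u v uxx vx : ℝ) : Matrix (Fin 3) (Fin 3) ℂ :=
  (((2*uxx - u*v - 3*vx : ℝ) : ℂ)/9) • !![ω^2, 1, ω; 1, ω, ω^2; ω, ω^2, 1]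

/-- V⁽⁰⁾. -/
noncomputable def V0 (u v ux : ℝ) : Matrix (Fin 3) (Fin 3) ℂ :=
  (1/9 : ℂ) •
  !![0, ω^2*(u : ℂ)^2 + (1-ω)*(ux : ℂ) - 3*(v : ℂ), ω*(u : ℂ)^2 + (ω+2)*(ux : ℂ) - 3*(v : ℂ);
     ω*(u : ℂ)^2 - 3*(v : ℂ) + (ω+2)*(ux : ℂ), 0, ω^2*(u : ℂ)^2 + (1-ω)*(ux : ℂ) - 3*(v : ℂ);
     ω^2*(u : ℂ)^2 - 3*(v : ℂ) + (1-ω)*(ux : ℂ), ω*(u : ℂ)^2 - 3*(v : ℂ) + (ω+2)*(ux : ℂ), 0]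

/-- The gauge-transformed spatial Lax matrix L(k) = −kJ + U⁽⁰⁾ + (1/k)U⁽⁻¹⁾. -/
noncomputable def Lmat (u v : ℝ) (k : ℂ) : Matrix (Fin 3) (Fin 3) ℂ :=
  (-k) • Jmat + U0 u + k⁻¹ • Um1 v

/-- The gauge-transformed temporal Lax matrix Z(k) = k²J² + kV⁽¹⁾ + V⁽⁰⁾ + (1/k)V⁽⁻¹⁾. -/
noncomputable def Zmat (u v ux uxx vx : ℝ) (k : ℂ) : Matrix (Fin 3) (Fin 3) ℂ :=
  k^2 • Jmat^2 + k • V1 u + V0 u v ux + k⁻¹ • Vm1 u v uxx vx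

/-- The permutation matrix 𝓑 swapping the first two coordinates. -/
def Bmat : Matrix (Fin 3) (Fin 3) ℂ := !![0, 1, 0; 1, 0, 0; 0, 0, 1]

/-!
The map `M ↦ 𝓑 M̄ 𝓑` is a conjugate-linear ring endomorphism, because `𝓑² = 1`. It fixes every
coefficient matrix `J, U⁽⁰⁾, U⁽⁻¹⁾, V⁽¹⁾, V⁽⁰⁾, V⁽⁻¹⁾`: conjugation exchanges `ω` and `ω²`
(`|ω| = 1`, `ω³ = 1`) and so does swapping the first two rows and columns, while `u, v, …` are real.
Applied to `L(k̄)` or `Z(k̄)` it thus only conjugates the powers of `k̄` back to powers of `k`.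
-/

open ComplexConjugate

lemma isPrimitiveRoot_omega : IsPrimitiveRoot ω 3 := by
  simpa [ω] using Complex.isPrimitiveRoot_exp 3 (by norm_num)

lemma omega_sq_add_omega_add_one : ω ^ 2 + ω + 1 = 0 := by
  have h := isPrimitiveRoot_omega.geom_sum_eq_zero (by norm_num)
  simp only [Finset.sum_range_succ, Finset.sum_range_zero, pow_zero, pow_one] at h
  linear_combination h

lemma omega_sq_add_two : ω ^ 2 + 2 = 1 - ω := by
  linear_combination omega_sq_add_omega_add_one

lemma one_sub_omega_sq : 1 - ω ^ 2 = ω + 2 := by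
  linear_combination -omega_sq_add_omega_add_one

lemma conj_omega : conj ω = ω ^ 2 := by
  have hnorm : conj ω * ω = 1 := by
    rw [Complex.conj_mul', isPrimitiveRoot_omega.norm'_eq_one (by norm_num)]
    simp
  calc conj ω = conj ω * ω ^ 3 := by rw [isPrimitiveRoot_omega.pow_eq_one, mul_one]
    _ = (conj ω * ω) * ω ^ 2 := by ring
    _ = ω ^ 2 := by rw [hnorm, one_mul]

lemma conj_omega_sq : conj (ω ^ 2) = ω := by
  rw [map_pow, conj_omega, ← pow_mul, show ω ^ (2 * 2) = ω ^ 3 * ω by ring,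
    isPrimitiveRoot_omega.pow_eq_one, one_mul]

section TwistedConj

variable {n R : Type*} [Fintype n] [CommSemiring R] [StarRing R]

def twistedConj (P M : Matrix n n R) : Matrix n n R := P * M.map (starRingEnd R) * P

lemma twistedConj_add (P M N : Matrix n n R) :
    twistedConj P (M + N) = twistedConj P M + twistedConj P N := by
  rw [twistedConj, twistedConj, twistedConj, Matrix.map_add _ (map_add _), Matrix.mul_add,
    Matrix.add_mul]

lemma twistedConj_smul (P M : Matrix n n R) (c : R) :
    twistedConj P (c • M) = starRingEnd R c • twistedConj P M := by
  simp only [twistedConj, Matrix.map_smul' _ _ _ (map_mul _), Matrix.mul_smul, Matrix.smul_mul]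

lemma twistedConj_mul [DecidableEq n] {P : Matrix n n R} (hP : P * P = 1) (M N : Matrix n n R) :
    twistedConj P (M * N) = twistedConj P M * twistedConj P N := by
  simp only [twistedConj, Matrix.map_mul, Matrix.mul_assoc]
  rw [← Matrix.mul_assoc P P, hP, Matrix.one_mul]

end TwistedConj

lemma Bmat_mul_self : Bmat * Bmat = 1 := by
  simp [Bmat, Matrix.one_fin_three]

lemma twistedConj_Bmat_of (a b c d e f g h i : ℂ) :
    twistedConj Bmat !![a, b, c; d, e, f; g, h, i] =
      !![conj e, conj d, conj f; conj b, conj a, conj c; conj h, conj g, conj i] := by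
  ext i j
  fin_cases i <;> fin_cases j <;>
    simp [twistedConj, Bmat, Matrix.mul_apply, Fin.sum_univ_three, Matrix.vecMul, dotProduct]

lemma twistedConj_Bmat_Jmat : twistedConj Bmat Jmat = Jmat := by
  rw [Jmat, Matrix.diagonal_vec3, twistedConj_Bmat_of]
  simp [conj_omega, conj_omega_sq]

lemma twistedConj_Bmat_U0 (u : ℝ) : twistedConj Bmat (U0 u) = U0 u := by
  rw [U0, twistedConj_smul, twistedConj_Bmat_of]
  simp [conj_omega, conj_omega_sq, map_ofNat]

lemma twistedConj_Bmat_Um1 (v : ℝ) : twistedConj Bmat (Um1 v) = Um1 v := by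
  rw [Um1, twistedConj_smul, twistedConj_Bmat_of]
  simp [conj_omega, conj_omega_sq, map_ofNat]

lemma twistedConj_Bmat_V1 (u : ℝ) : twistedConj Bmat (V1 u) = V1 u := by
  rw [V1, twistedConj_smul, twistedConj_Bmat_of]
  simp [conj_omega, conj_omega_sq, map_ofNat]

lemma twistedConj_Bmat_Vm1 (u v uxx vx : ℝ) :
    twistedConj Bmat (Vm1 u v uxx vx) = Vm1 u v uxx vx := by
  rw [Vm1, twistedConj_smul, twistedConj_Bmat_of]
  simp [conj_omega, conj_omega_sq, map_ofNat]

lemma twistedConj_Bmat_V0 (u v ux : ℝ) : twistedConj Bmat (V0 u v ux) = V0 u v ux := by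
  rw [V0, twistedConj_smul, twistedConj_Bmat_of]
  simp [conj_omega, conj_omega_sq, omega_sq_add_two, one_sub_omega_sq, map_ofNat,
    sub_add_eq_add_sub]

lemma twistedConj_Bmat_Lmat (u v : ℝ) (k : ℂ) :
    twistedConj Bmat (Lmat u v (conj k)) = Lmat u v k := by
  simp only [Lmat, twistedConj_add, twistedConj_smul, twistedConj_Bmat_Jmat, twistedConj_Bmat_U0,
    twistedConj_Bmat_Um1, map_neg, map_inv₀, Complex.conj_conj]

lemma twistedConj_Bmat_Zmat (u v ux uxx vx : ℝ) (k : ℂ) :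
    twistedConj Bmat (Zmat u v ux uxx vx (conj k)) = Zmat u v ux uxx vx k := by
  simp only [Zmat, twistedConj_add, twistedConj_smul, pow_two, twistedConj_mul Bmat_mul_self,
    twistedConj_Bmat_Jmat, twistedConj_Bmat_V1, twistedConj_Bmat_V0, twistedConj_Bmat_Vm1, map_mul,
    map_inv₀, Complex.conj_conj]

theorem lax_Z2_symmetry_general (u v ux uxx vx : ℝ) (k : ℂ) :
    Lmat u v k = Bmat * (Lmat u v (starRingEnd ℂ k)).map (starRingEnd ℂ) * Bmat ∧
    Zmat u v ux uxx vx k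
      = Bmat * (Zmat u v ux uxx vx (starRingEnd ℂ k)).map (starRingEnd ℂ) * Bmat :=
  ⟨(twistedConj_Bmat_Lmat u v k).symm, (twistedConj_Bmat_Zmat u v ux uxx vx k).symm⟩

/-- The ℤ₂ symmetry L(k) = 𝓑 conj(L(k̄)) 𝓑 and Z(k) = 𝓑 conj(Z(k̄)) 𝓑. -/
theorem lax_Z2_symmetry (u v ux uxx vx : ℝ) (k : ℂ) (hk : k ≠ 0) :
    Lmat u v k = Bmat * (Lmat u v (starRingEnd ℂ k)).map (starRingEnd ℂ) * Bmat ∧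
    Zmat u v ux uxx vx k
      = Bmat * (Zmat u v ux uxx vx (starRingEnd ℂ k)).map (starRingEnd ℂ) * Bmat :=
  lax_Z2_symmetry_general u v ux uxx vx k
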